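/- arXiv:2403.11824 — 4 statements merged into one kernel-verified Lean document; each statement's English description precedes it below -/
import Mathlib

section
/- Let V : ℝ → ℝ ∪ {−∞,+∞} be nondecreasing, let C ∈ [0,∞) and γ > 0 be such that V⁺(λx) ≤ λ^γ (V⁺(x) + C) for all λ ≥ 1, x ∈ ℝ. Then for every x ∈ ℝ, h ∈ ℝ^d and y ∈ ℝ^d, V⁺(x + h·y) ≤ (max(|h|, x⁺, 1))^γ ( Σ_{θ ∈ {−1,1}^d} V⁺(1 + θ·y) + C ), where |h| is the Euclidean norm, h·y the scalar product, and x⁺ = max(x,0). -/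
open scoped RealInnerProductSpace

/-! With `λ = max(|h|, x⁺, 1)` and `s = |y|₁` one has `x + h·y ≤ λ (1 + s)`, so monotonicity and
the elasticity bound give `V⁺(x + h·y) ≤ λ^γ (V⁺(1 + s) + C)`. Finally `1 + s = 1 + θ̂·y` for the
sign vector `θ̂ = sign y`, and `V⁺(1 + θ̂·y)` is one of the nonnegative terms of the sum over `θ`. -/

lemma real_inner_le_norm_mul_sum_abs {ι : Type*} [Fintype ι] (h y : EuclideanSpace ℝ ι) :
    ⟪h, y⟫ ≤ ‖h‖ * ∑ i, |y i| := by
  rw [PiLp.inner_apply, Finset.mul_sum]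
  gcongr with i
  calc ⟪h i, y i⟫ ≤ ‖h i‖ * ‖y i‖ := real_inner_le_norm _ _
    _ ≤ ‖h‖ * |y i| := by
      rw [Real.norm_eq_abs (y i)]
      gcongr
      exact PiLp.norm_apply_le h i

lemma add_inner_le_max_mul_one_add_sum_abs {ι : Type*} [Fintype ι] (x : ℝ)
    (h y : EuclideanSpace ℝ ι) :
    x + ⟪h, y⟫ ≤ max (max ‖h‖ (max x 0)) 1 * (1 + ∑ i, |y i|) := by
  have hs : 0 ≤ ∑ i, |y i| := Finset.sum_nonneg fun i _ => abs_nonneg (y i)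
  have hx : x ≤ max (max ‖h‖ (max x 0)) 1 :=
    (le_max_left x 0).trans ((le_max_right _ _).trans (le_max_left _ _))
  have hh : ‖h‖ ≤ max (max ‖h‖ (max x 0)) 1 := (le_max_left _ _).trans (le_max_left _ _)
  have := real_inner_le_norm_mul_sum_abs h y
  linarith [mul_le_mul_of_nonneg_right hh hs]

lemma sum_sign_mul_eq_sum_abs {ι : Type*} [Fintype ι] (y : ι → ℝ) :
    ∑ i, (if decide (0 ≤ y i) then (1 : ℝ) else -1) * y i = ∑ i, |y i| := by
  refine Finset.sum_congr rfl fun i _ => ?_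
  by_cases hy : 0 ≤ y i
  · simp [hy, abs_of_nonneg hy]
  · simp [hy, abs_of_neg (not_le.mp hy)]

lemma max_apply_zero_le_rpow_mul_of_le_mul {V : ℝ → EReal} (hV : Monotone V) {C γ : ℝ}
    (hVp : ∀ l x : ℝ, 1 ≤ l →
      max (V (l * x)) 0 ≤ ((l ^ γ : ℝ) : EReal) * (max (V x) 0 + (C : EReal)))
    {l z t : ℝ} (hl : 1 ≤ l) (hz : z ≤ l * t) :
    max (V z) 0 ≤ ((l ^ γ : ℝ) : EReal) * (max (V t) 0 + (C : EReal)) :=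
  (max_le_max_right 0 (hV hz)).trans (hVp l t hl)

theorem pos_part_bound_general (d : ℕ) (V : ℝ → EReal) (hV : Monotone V)
    (C γ : ℝ)
    (hVp : ∀ l x : ℝ, 1 ≤ l →
      max (V (l * x)) 0 ≤ ((l ^ γ : ℝ) : EReal) * (max (V x) 0 + (C : EReal))) :
    ∀ (x : ℝ) (h y : EuclideanSpace ℝ (Fin d)),
      max (V (x + ⟪h, y⟫)) 0 ≤
        (((max (max ‖h‖ (max x 0)) 1) ^ γ : ℝ) : EReal) *
          ((∑ θ : Fin d → Bool,
              max (V (1 + ∑ i, (if θ i then (1 : ℝ) else -1) * y i)) 0) + (C : EReal)) := by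
  intro x h y
  have hsign : max (V (1 + ∑ i, |y i|)) 0 ≤
      ∑ θ : Fin d → Bool, max (V (1 + ∑ i, (if θ i then (1 : ℝ) else -1) * y i)) 0 := by
    rw [← sum_sign_mul_eq_sum_abs]
    exact Finset.single_le_sum (f := fun θ : Fin d → Bool =>
        max (V (1 + ∑ i, (if θ i then (1 : ℝ) else -1) * y i)) 0)
      (fun θ _ => le_max_right _ _) (Finset.mem_univ fun i => decide (0 ≤ y i))
  calc max (V (x + ⟪h, y⟫)) 0
      ≤ (((max (max ‖h‖ (max x 0)) 1) ^ γ : ℝ) : EReal) *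
          (max (V (1 + ∑ i, |y i|)) 0 + (C : EReal)) :=
        max_apply_zero_le_rpow_mul_of_le_mul hV hVp (le_max_right _ _)
          (add_inner_le_max_mul_one_add_sum_abs x h y)
    _ ≤ _ := by gcongr

/-- For a nondecreasing `V : ℝ → ℝ ∪ {±∞}` whose positive part satisfies
`V⁺(λx) ≤ λ^γ (V⁺(x) + C)` for `λ ≥ 1` (`C ≥ 0`, `γ > 0`), one has for every
`x ∈ ℝ` and `h, y ∈ ℝ^d`:
`V⁺(x + h·y) ≤ (max(|h|, x⁺, 1))^γ ( Σ_{θ ∈ {-1,1}^d} V⁺(1 + θ·y) + C )`,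
where `|h|` is the Euclidean norm, `h·y` the scalar product and `x⁺ = max(x,0)`.
The sign vectors `θ ∈ {-1,1}^d` are encoded by `θ : Fin d → Bool`. -/
theorem pos_part_bound (d : ℕ) (V : ℝ → EReal) (hV : Monotone V)
    (C γ : ℝ) (hC : 0 ≤ C) (hγ : 0 < γ)
    (hVp : ∀ l x : ℝ, 1 ≤ l →
      max (V (l * x)) 0 ≤ ((l ^ γ : ℝ) : EReal) * (max (V x) 0 + (C : EReal))) :
    ∀ (x : ℝ) (h y : EuclideanSpace ℝ (Fin d)),
      max (V (x + ⟪h, y⟫)) 0 ≤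
        (((max (max ‖h‖ (max x 0)) 1) ^ γ : ℝ) : EReal) *
          ((∑ θ : Fin d → Bool,
              max (V (1 + ∑ i, (if θ i then (1 : ℝ) else -1) * y i)) 0) + (C : EReal)) :=
  pos_part_bound_general d V hV C γ hVp
end

section
/- Let (Ω, 𝔄, μ) be a probability space, Y : Ω → ℝ^d measurable, and W : Ω × ℝ → ℝ ∪ {−∞,+∞} jointly measurable such that W(ω,·) is upper semicontinuous for every ω. Assume that for every M > 0 there is a μ-integrable function G_M : Ω → [0,∞) with W⁺(ω, x + h·Y(ω)) ≤ G_M(ω) for all ω ∈ Ω and all (x,h) with |x| ≤ M and |h| ≤ M. Then the function Φ : ℝ × ℝ^d → ℝ ∪ {−∞,+∞} defined by Φ(x,h) = ∫ W(ω, x + h·Y(ω)) μ(dω) is upper semicontinuous. -/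
open MeasureTheory
open scoped ENNReal RealInnerProductSpace

/-- Positive part of an extended real, as an extended nonnegative real. -/
noncomputable def epos (x : EReal) : ℝ≥0∞ := if x = ⊤ then ⊤ else ENNReal.ofReal x.toReal

/-- Integral of an extended-real function with the convention `+∞ - ∞ = -∞` :
it equals `∫ f⁺ - ∫ f⁻` when one of the two parts is finite, and `-∞` when both are
infinite (in `EReal`, `⊤ - ⊤ = ⊥`). -/
noncomputable def eIntegral {Ω : Type*} [MeasurableSpace Ω] (μ : Measure Ω)
    (f : Ω → EReal) : EReal :=
  ((∫⁻ ω, epos (f ω) ∂μ : ℝ≥0∞) : EReal) - ((∫⁻ ω, epos (-(f ω)) ∂μ : ℝ≥0∞) : EReal)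

/-!
Upper semicontinuity is tested along sequences `(xₙ, hₙ) → (x, h)`. Such a sequence eventually
stays in a bounded set, on which `W⁺` is dominated by a single integrable `G`. The reverse Fatou
lemma then gives `limsup ∫ W⁺(xₙ, hₙ) ≤ ∫ limsup W⁺(xₙ, hₙ) ≤ ∫ W⁺(x, h)`, the last step by upper
semicontinuity of `W(ω, ·)`, and Fatou's lemma gives `∫ W⁻(x, h) ≤ liminf ∫ W⁻(xₙ, hₙ)`. As the
positive parts have finite integrals, subtracting these bounds is legitimate even under the
convention `∞ - ∞ = -∞`.
-/

open Filter Topology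

lemma epos_eq_toENNReal : epos = EReal.toENNReal := rfl

lemma UpperSemicontinuous.limsup_comp_le {X γ ι : Type*} [TopologicalSpace X]
    [CompleteLinearOrder γ] {f : X → γ} (hf : UpperSemicontinuous f) {l : Filter ι}
    {u : ι → X} {x : X} (hu : Tendsto u l (𝓝 x)) : limsup (f ∘ u) l ≤ f x :=
  hu.limsup_comp_le_limsup.trans (hf.limsup_le x)

lemma upperSemicontinuous_of_limsup_comp_le {X γ : Type*} [TopologicalSpace X]
    [FirstCountableTopology X] [CompleteLinearOrder γ] {f : X → γ}
    (h : ∀ (x : X) (s : ℕ → X), Tendsto s atTop (𝓝 x) → limsup (f ∘ s) atTop ≤ f x) :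
    UpperSemicontinuous f := by
  intro x y hy
  by_contra hnot
  obtain ⟨s, hs, hys⟩ := exists_seq_forall_of_frequently (not_eventually.1 hnot)
  have : y ≤ limsup (f ∘ s) atTop :=
    le_limsup_of_frequently_le (Frequently.of_forall fun n => not_lt.1 (hys n))
  exact (this.trans (h x s hs)).not_gt hy

namespace EReal

variable {ι : Type*} {l : Filter ι} [l.NeBot]

lemma monotone_toENNReal : Monotone EReal.toENNReal := fun _ _ => toENNReal_le_toENNReal

lemma limsup_toENNReal (u : ι → EReal) :
    limsup (fun i => (u i).toENNReal) l = (limsup u l).toENNReal :=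
  (monotone_toENNReal.map_limsup_of_continuousAt u continuous_toENNReal.continuousAt).symm

lemma liminf_toENNReal (u : ι → EReal) :
    liminf (fun i => (u i).toENNReal) l = (liminf u l).toENNReal :=
  (monotone_toENNReal.map_liminf_of_continuousAt u continuous_toENNReal.continuousAt).symm

lemma limsup_coe_ennreal (a : ι → ℝ≥0∞) :
    limsup (fun i => (a i : EReal)) l = limsup a l :=
  (coe_ennreal_strictMono.monotone.map_limsup_of_continuousAt a
    continuous_coe_ennreal_ereal.continuousAt).symm

lemma liminf_coe_ennreal (a : ι → ℝ≥0∞) :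
    liminf (fun i => (a i : EReal)) l = liminf a l :=
  (coe_ennreal_strictMono.monotone.map_liminf_of_continuousAt a
    continuous_coe_ennreal_ereal.continuousAt).symm

lemma limsup_coe_sub_coe_le {a b : ι → ℝ≥0∞} (ha : limsup a l ≠ ∞) :
    limsup (fun i => (a i : EReal) - b i) l ≤
      ((limsup a l : ℝ≥0∞) : EReal) - ((liminf b l : ℝ≥0∞) : EReal) := by
  simp only [sub_eq_add_neg]
  refine (limsup_add_le (.inl ?_) (.inl ?_)).trans_eq ?_
  · simp [limsup_coe_ennreal]
  · simpa [limsup_coe_ennreal] using ha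
  · rw [limsup_coe_ennreal, ← liminf_coe_ennreal]
    exact congrArg _ (limsup_neg (v := fun i => (b i : EReal)))

end EReal

lemma limsup_eIntegral_le {Ω : Type*} [MeasurableSpace Ω] {μ : Measure Ω}
    {f : ℕ → Ω → EReal} {g : Ω → EReal} (hf : ∀ n, Measurable (f n))
    {G : Ω → ℝ≥0∞} (hG : ∫⁻ ω, G ω ∂μ ≠ ∞) (hfG : ∀ n ω, (f n ω).toENNReal ≤ G ω)
    (hfg : ∀ ω, limsup (fun n => f n ω) atTop ≤ g ω) :
    limsup (fun n => eIntegral μ (f n)) atTop ≤ eIntegral μ g := by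
  simp only [eIntegral, epos_eq_toENNReal]
  have hpos : limsup (fun n => ∫⁻ ω, (f n ω).toENNReal ∂μ) atTop ≤
      ∫⁻ ω, (g ω).toENNReal ∂μ := by
    refine (limsup_lintegral_le G (fun n => (hf n).ereal_toENNReal)
      (fun n => ae_of_all _ (hfG n)) hG).trans (lintegral_mono fun ω => ?_)
    rw [EReal.limsup_toENNReal]
    exact EReal.monotone_toENNReal (hfg ω)
  have hneg : ∫⁻ ω, (-g ω).toENNReal ∂μ ≤
      liminf (fun n => ∫⁻ ω, (-f n ω).toENNReal ∂μ) atTop := by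
    refine (lintegral_mono fun ω => ?_).trans
      (lintegral_liminf_le fun n => (hf n).neg.ereal_toENNReal)
    rw [EReal.liminf_toENNReal]
    refine EReal.monotone_toENNReal ?_
    show -g ω ≤ liminf (-fun n => f n ω) atTop
    rw [EReal.liminf_neg]
    exact EReal.neg_le_neg_iff.2 (hfg ω)
  have hfin : limsup (fun n => ∫⁻ ω, (f n ω).toENNReal ∂μ) atTop ≠ ∞ :=
    ne_top_of_le_ne_top hG (limsup_le_of_le (by isBoundedDefault)
      (Eventually.of_forall fun n => lintegral_mono (hfG n)))
  exact (EReal.limsup_coe_sub_coe_le hfin).trans (EReal.sub_le_sub (by exact_mod_cast hpos)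
    (by exact_mod_cast hneg))

theorem upperSemicontinuous_expected_utility_general {Ω : Type*} [MeasurableSpace Ω]
    (μ : Measure Ω) (d : ℕ)
    (Y : Ω → EuclideanSpace ℝ (Fin d)) (hY : Measurable Y)
    (W : Ω × ℝ → EReal) (hW : Measurable W)
    (hWusc : ∀ ω : Ω, UpperSemicontinuous fun x : ℝ => W (ω, x))
    (hdom : ∀ M : ℝ, 0 < M → ∃ G : Ω → ℝ, Integrable G μ ∧ (∀ ω, 0 ≤ G ω) ∧
      ∀ (ω : Ω) (x : ℝ) (h : EuclideanSpace ℝ (Fin d)), |x| ≤ M → ‖h‖ ≤ M →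
        max (W (ω, x + ⟪h, Y ω⟫)) 0 ≤ ((G ω : ℝ) : EReal)) :
    UpperSemicontinuous fun p : ℝ × EuclideanSpace ℝ (Fin d) =>
      eIntegral μ fun ω => W (ω, p.1 + ⟪p.2, Y ω⟫) := by
  refine upperSemicontinuous_of_limsup_comp_le fun p s hs => ?_
  obtain ⟨G, hG, -, hWG⟩ := hdom (‖p‖ + 1) (by positivity)
  obtain ⟨N, hN⟩ :=
    eventually_atTop.1 (hs.norm.eventually (eventually_le_nhds (lt_add_one ‖p‖)))
  rw [← limsup_nat_add _ N]
  refine limsup_eIntegral_le (G := fun ω => ENNReal.ofReal (G ω))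
    (fun n => hW.comp (measurable_id.prodMk (measurable_const.add (measurable_const.inner hY))))
    hG.lintegral_lt_top.ne (fun n ω => ?_) (fun ω => ?_)
  · have hbound := hN (n + N) (Nat.le_add_left N n)
    refine EReal.monotone_toENNReal ((le_max_left _ 0).trans (hWG ω _ _ ?_ ?_))
    · exact (norm_fst_le _).trans hbound
    · exact (norm_snd_le _).trans hbound
  · have hcont : Continuous fun q : ℝ × EuclideanSpace ℝ (Fin d) => q.1 + ⟪q.2, Y ω⟫ := by
      fun_prop
    exact (hWusc ω).limsup_comp_le
      ((hcont.tendsto p).comp ((tendsto_add_atTop_iff_nat N).2 hs))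

/-- If `W(ω,·)` is usc for every `ω`, `W` is jointly measurable, and for every `M > 0`
the positive part `W⁺(ω, x + h·Y(ω))` is dominated, uniformly over `|x| ≤ M`, `|h| ≤ M`,
by an integrable function `G_M`, then `Φ(x,h) = ∫ W(ω, x + h·Y(ω)) μ(dω)` is upper
semicontinuous. -/
theorem upperSemicontinuous_expected_utility {Ω : Type*} [MeasurableSpace Ω]
    (μ : Measure Ω) [IsProbabilityMeasure μ] (d : ℕ)
    (Y : Ω → EuclideanSpace ℝ (Fin d)) (hY : Measurable Y)
    (W : Ω × ℝ → EReal) (hW : Measurable W)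
    (hWusc : ∀ ω : Ω, UpperSemicontinuous fun x : ℝ => W (ω, x))
    (hdom : ∀ M : ℝ, 0 < M → ∃ G : Ω → ℝ, Integrable G μ ∧ (∀ ω, 0 ≤ G ω) ∧
      ∀ (ω : Ω) (x : ℝ) (h : EuclideanSpace ℝ (Fin d)), |x| ≤ M → ‖h‖ ≤ M →
        max (W (ω, x + ⟪h, Y ω⟫)) 0 ≤ ((G ω : ℝ) : EReal)) :
    UpperSemicontinuous fun p : ℝ × EuclideanSpace ℝ (Fin d) =>
      eIntegral μ fun ω => W (ω, p.1 + ⟪p.2, Y ω⟫) :=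
  upperSemicontinuous_expected_utility_general μ d Y hY W hW hWusc hdom
end

section
/- Let (Ω, 𝔄, P) be a probability space and Z : Ω → ℝ an integrable random variable with P(Z > 0) > 0 and P(Z < 0) > 0. Define U : ℝ → ℝ by U(x) = x for x ≤ 0 and U(x) = 1 for x > 0, and φ : ℝ → ℝ by φ(h) = E_P[U(hZ)]. Then sup_{h ∈ ℝ} φ(h) = max(P(Z > 0), P(Z < 0)) and this supremum is not attained: φ(h) < max(P(Z > 0), P(Z < 0)) for every h ∈ ℝ. -/
open MeasureTheory Filter Topology

/-! For `h > 0` one has `U(hZ) = 1_{Z > 0} - h Z⁻`, so `φ(h) = P(Z > 0) - h E[Z⁻]`; symmetrically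
`φ(h) = P(Z < 0) + h E[Z⁺]` for `h < 0`, and `φ(0) = 0`. Since `E[Z⁻]` and `E[Z⁺]` are positive,
both affine branches stay strictly below their one-sided limits `P(Z > 0)` and `P(Z < 0)` at `0`,
where the jump of `U` makes `φ` drop to `0`. -/

noncomputable def stepU (x : ℝ) : ℝ := if x ≤ 0 then x else 1

lemma stepU_mul_of_pos {h : ℝ} (hh : 0 < h) (x : ℝ) :
    stepU (h * x) = (Set.Ioi 0).indicator 1 x - h * x⁻ := by
  rcases le_or_gt x 0 with hx | hx
  · simp [stepU, mul_nonpos_of_nonneg_of_nonpos hh.le hx, hx.not_gt, negPart_eq_neg.2 hx]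
  · simp [stepU, (mul_pos hh hx).not_ge, hx, negPart_eq_zero.2 hx.le]

section

variable {Ω : Type*} [MeasurableSpace Ω] {μ : Measure Ω} {Z : Ω → ℝ}

lemma integral_negPart_pos (hZ : Integrable Z μ) (hneg : 0 < μ {ω | Z ω < 0}) :
    0 < ∫ ω, (Z ω)⁻ ∂μ := by
  rw [integral_pos_iff_support_of_nonneg (fun ω => negPart_nonneg (Z ω)) hZ.neg_part]
  simpa [Function.support] using hneg

lemma integral_posPart_pos (hZ : Integrable Z μ) (hpos : 0 < μ {ω | 0 < Z ω}) :
    0 < ∫ ω, (Z ω)⁺ ∂μ := by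
  simpa using integral_negPart_pos hZ.neg (by simpa using hpos)

variable [IsFiniteMeasure μ]

lemma integral_stepU_mul_of_pos (hZm : Measurable Z) (hZ : Integrable Z μ) {h : ℝ}
    (hh : 0 < h) :
    ∫ ω, stepU (h * Z ω) ∂μ = μ.real {ω | 0 < Z ω} - h * ∫ ω, (Z ω)⁻ ∂μ := by
  have hs : MeasurableSet {ω | 0 < Z ω} := hZm measurableSet_Ioi
  have hind (ω : Ω) : (Set.Ioi 0).indicator 1 (Z ω) = {ω | 0 < Z ω}.indicator (1 : Ω → ℝ) ω :=
    rfl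
  simp_rw [stepU_mul_of_pos hh, hind]
  rw [integral_sub (f := {ω | 0 < Z ω}.indicator 1) (g := fun ω => h * (Z ω)⁻)
      ((integrable_const 1).indicator hs) (hZ.neg_part.const_mul h), integral_const_mul, integral_indicator_one hs]

lemma integral_stepU_mul_of_neg (hZm : Measurable Z) (hZ : Integrable Z μ) {h : ℝ}
    (hh : h < 0) :
    ∫ ω, stepU (h * Z ω) ∂μ = μ.real {ω | Z ω < 0} + h * ∫ ω, (Z ω)⁺ ∂μ := by
  have := integral_stepU_mul_of_pos hZm.neg hZ.neg (neg_pos.2 hh)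
  simp only [Pi.neg_apply, neg_mul_neg, negPart_neg, neg_pos] at this
  rw [this]; ring

lemma tendsto_integral_stepU_mul_nhdsGT (hZm : Measurable Z) (hZ : Integrable Z μ) :
    Tendsto (fun h => ∫ ω, stepU (h * Z ω) ∂μ) (𝓝[>] 0) (𝓝 (μ.real {ω | 0 < Z ω})) := by
  have hlin : Tendsto (fun h => μ.real {ω | 0 < Z ω} - h * ∫ ω, (Z ω)⁻ ∂μ) (𝓝[>] 0)
      (𝓝 (μ.real {ω | 0 < Z ω})) :=
    ((continuous_const.sub (continuous_id.mul continuous_const)).tendsto' 0 _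
      (by simp)).mono_left nhdsWithin_le_nhds
  exact hlin.congr' (eventually_nhdsWithin_of_forall fun h hh =>
    (integral_stepU_mul_of_pos hZm hZ hh).symm)

lemma tendsto_integral_stepU_mul_nhdsLT (hZm : Measurable Z) (hZ : Integrable Z μ) :
    Tendsto (fun h => ∫ ω, stepU (h * Z ω) ∂μ) (𝓝[<] 0) (𝓝 (μ.real {ω | Z ω < 0})) := by
  have hneg : Tendsto Neg.neg (𝓝[<] (0 : ℝ)) (𝓝[>] 0) := by
    simpa using tendsto_neg_nhdsLT (a := (0 : ℝ))
  simpa [Function.comp_def] using (tendsto_integral_stepU_mul_nhdsGT hZm.neg hZ.neg).comp hneg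

lemma integral_stepU_mul_lt_max (hZm : Measurable Z) (hZ : Integrable Z μ)
    (hpos : 0 < μ {ω | 0 < Z ω}) (hneg : 0 < μ {ω | Z ω < 0}) (h : ℝ) :
    ∫ ω, stepU (h * Z ω) ∂μ < max (μ.real {ω | 0 < Z ω}) (μ.real {ω | Z ω < 0}) := by
  rcases lt_trichotomy h 0 with hh | rfl | hh
  · rw [integral_stepU_mul_of_neg hZm hZ hh]
    have := mul_neg_of_neg_of_pos hh (integral_posPart_pos hZ hpos)
    exact lt_max_of_lt_right (by linarith)
  · rw [show ∫ ω, stepU (0 * Z ω) ∂μ = 0 by simp [stepU]]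
    exact lt_max_of_lt_left (ENNReal.toReal_pos hpos.ne' (measure_ne_top μ _))
  · rw [integral_stepU_mul_of_pos hZm hZ hh]
    have := mul_pos hh (integral_negPart_pos hZ hneg)
    exact lt_max_of_lt_left (by linarith)

end

/-- For an integrable `Z` with `P(Z>0) > 0` and `P(Z<0) > 0`, the function
`φ(h) = E_P[U(hZ)]` with the step utility `U` has supremum
`max(P(Z>0), P(Z<0))`, and this supremum is not attained: `φ(h) < max(P(Z>0), P(Z<0))`
for every `h ∈ ℝ`. -/
theorem step_utility_sup_not_attained {Ω : Type*} [MeasurableSpace Ω]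
    (P : Measure Ω) [IsProbabilityMeasure P]
    (Z : Ω → ℝ) (hZm : Measurable Z) (hZ : Integrable Z P)
    (hpos : 0 < P {ω | 0 < Z ω}) (hneg : 0 < P {ω | Z ω < 0}) :
    IsLUB (Set.range fun h : ℝ => ∫ ω, stepU (h * Z ω) ∂P)
        (max (P {ω | 0 < Z ω}).toReal (P {ω | Z ω < 0}).toReal) ∧
      ∀ h : ℝ, ∫ ω, stepU (h * Z ω) ∂P <
        max (P {ω | 0 < Z ω}).toReal (P {ω | Z ω < 0}).toReal := by
  have hlt := integral_stepU_mul_lt_max hZm hZ hpos hneg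
  refine ⟨isLUB_of_mem_closure (Set.forall_mem_range.2 fun h => (hlt h).le) ?_, hlt⟩
  rcases max_choice (P {ω | 0 < Z ω}).toReal (P {ω | Z ω < 0}).toReal with hmax | hmax <;>
    rw [hmax]
  · exact mem_closure_of_tendsto (tendsto_integral_stepU_mul_nhdsGT hZm hZ)
      (.of_forall Set.mem_range_self)
  · exact mem_closure_of_tendsto (tendsto_integral_stepU_mul_nhdsLT hZm hZ)
      (.of_forall Set.mem_range_self)
end

section
/- Let (Ω, 𝔄) be a measurable space, Y : Ω → ℝ^d measurable, C : Ω → [0,∞] measurable, γ > 0, and V : Ω × ℝ → ℝ ∪ {−∞,+∞} such that V(ω, λx) ≤ λ^γ (V(ω,x) + C(ω)) for all ω with C(ω) < +∞, all λ ≥ 1 and all x ∈ ℝ. Let 𝒬 be a nonempty set of probability measures on (Ω,𝔄) with q(C < +∞) = 1 for every q ∈ 𝒬, and assume ω ↦ V(ω, x + h·Y(ω)) is measurable for every (x,h). Define u(x) = sup_{h ∈ ℝ^d} inf_{q ∈ 𝒬} ∫ V(ω, x + h·Y(ω)) q(dω) and c = sup_{q ∈ 𝒬} ∫ C dq. If c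 < +∞, then u(λx) ≤ λ^γ (u(x) + c) for all λ ≥ 1 and x ∈ ℝ. -/
/-!
The positive part `epos` is `EReal.toENNReal`, so `eIntegral` is `∫ f⁺ - ∫ f⁻` in `EReal`.
For one prior `q`, integrate `V(ω, λx + h·Y) ≤ λ^γ (V(ω, x + λ⁻¹h·Y) + C(ω))`, which holds
`q`-a.e. because `∫ C dq ≤ c < ∞`: the integral is monotone, commutes with the factor
`λ^γ ≥ 0`, and the pointwise identity `(v + C)⁺ + v⁻ = v⁺ + (v + C)⁻ + C` shows that adding
`C` raises it by at most `∫ C dq ≤ c`. Since `y ↦ λ^γ (y + c)` is a continuous increasing map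
of `EReal`, it commutes with the infimum over `𝒬`; the supremum over `h` is then handled by
the substitution `h ↦ λ⁻¹h`.
-/

open MeasureTheory
open scoped ENNReal RealInnerProductSpace

namespace EReal

lemma toENNReal_add_coe_add_toENNReal_neg (x : EReal) {c : ℝ≥0∞} (hc : c ≠ ⊤) :
    (x + c).toENNReal + (-x).toENNReal = x.toENNReal + (-(x + c)).toENNReal + c := by
  lift c to NNReal using hc
  induction x using EReal.rec with
  | bot => simp
  | top => simp [coe_nnreal_eq_coe_real]
  | coe a =>
    rw [coe_nnreal_eq_coe_real, ← coe_add, ← coe_neg, ← coe_neg, real_coe_toENNReal,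
      real_coe_toENNReal, real_coe_toENNReal, real_coe_toENNReal, ← ENNReal.ofReal_coe_nnreal,
      ← ENNReal.toReal_eq_toReal_iff' (by finiteness) (by finiteness)]
    simp only [ENNReal.toReal_add, ENNReal.ofReal_ne_top, ne_eq, not_false_eq_true,
      ENNReal.add_ne_top, and_self, ENNReal.toReal_ofReal', max_def]
    have := c.2
    split_ifs <;> linarith

lemma toENNReal_neg_le_toENNReal_neg_add (x : EReal) {c : ℝ≥0∞} (hc : c ≠ ⊤) :
    (-x).toENNReal ≤ (-(x + c)).toENNReal + c := by
  lift c to NNReal using hc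
  have hneg : -(x + (c : ℝ)) + (c : ℝ) = -x := by
    rw [neg_add (.inr (coe_ne_top _)) (.inr (coe_ne_bot _)), sub_add_cancel]
  calc (-x).toENNReal = (-(x + (c : ℝ)) + (c : ℝ)).toENNReal := by rw [hneg]
    _ ≤ (-(x + (c : ℝ))).toENNReal + ((c : ℝ) : EReal).toENNReal := toENNReal_add_le
    _ = (-(x + ((c : ℝ≥0∞) : EReal))).toENNReal + c := by simp [coe_nnreal_eq_coe_real]

lemma coe_ennreal_sub_le_sub_add {a a' b b' k : ℝ≥0∞} (hk : k ≠ ⊤) (h : a' + b = a + b' + k)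
    (hb : b ≤ b' + k) : (a' : EReal) - b' ≤ (a : EReal) - b + k := by
  rcases eq_or_ne b' ⊤ with rfl | hb'
  · simp
  have hbt : b ≠ ⊤ := ne_top_of_le_ne_top (by finiteness) hb
  rcases eq_or_ne a ⊤ with rfl | ha
  · lift b to NNReal using hbt
    lift k to NNReal using hk
    simp [coe_nnreal_eq_coe_real]
  have ha' : a' ≠ ⊤ := by
    rintro rfl
    exact (by finiteness : a + b' + k ≠ ⊤) (by simpa using h.symm)
  lift a to NNReal using ha
  lift a' to NNReal using ha'
  lift b to NNReal using hbt
  lift b' to NNReal using hb'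
  lift k to NNReal using hk
  have h' : (a' : ℝ) + b = a + b' + k := by exact_mod_cast h
  simp only [coe_nnreal_eq_coe_real, ← coe_sub, ← coe_add, EReal.coe_le_coe_iff]
  linarith

lemma coe_mul_iInf_add {ι : Sort*} (f : ι → EReal) {k : ℝ} (hk : 0 < k) {c : EReal}
    (hc : c ≠ ⊥) (hc' : c ≠ ⊤) :
    (k : EReal) * ((⨅ i, f i) + c) = ⨅ i, (k : EReal) * (f i + c) := by
  refine Monotone.map_iInf_of_continuousAt (f := fun x => (k : EReal) * (x + c)) ?_ ?_ ?_
  · have hadd : ContinuousAt (· + c) (⨅ i, f i) :=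
      (continuousAt_add (Or.inr hc) (Or.inr hc')).comp (Continuous.prodMk_left c).continuousAt
    exact EReal.Tendsto.const_mul hadd (Or.inl (coe_ne_bot k)) (Or.inl (coe_ne_top k))
  · intro x y hxy
    dsimp only
    gcongr
  · simp [hc, EReal.coe_mul_top_of_pos hk]

end EReal

section eIntegral

variable {Ω : Type*} [MeasurableSpace Ω] {μ : Measure Ω}

lemma eIntegral_eq_lintegral_sub_lintegral (f : Ω → EReal) :
    eIntegral μ f = ((∫⁻ ω, (f ω).toENNReal ∂μ : ℝ≥0∞) : EReal) -
      ((∫⁻ ω, (-f ω).toENNReal ∂μ : ℝ≥0∞) : EReal) :=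
  rfl

lemma eIntegral_mono_ae {f g : Ω → EReal} (h : ∀ᵐ ω ∂μ, f ω ≤ g ω) :
    eIntegral μ f ≤ eIntegral μ g := by
  simp only [eIntegral_eq_lintegral_sub_lintegral]
  refine EReal.sub_le_sub (EReal.coe_ennreal_le_coe_ennreal_iff.2 ?_)
    (EReal.coe_ennreal_le_coe_ennreal_iff.2 ?_)
  · exact lintegral_mono_ae (h.mono fun ω hω => EReal.toENNReal_le_toENNReal hω)
  · exact lintegral_mono_ae
      (h.mono fun ω hω => EReal.toENNReal_le_toENNReal (EReal.neg_le_neg_iff.2 hω))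

lemma eIntegral_const_mul {k : ℝ} (hk : 0 ≤ k) (f : Ω → EReal) :
    eIntegral μ (fun ω => k * f ω) = k * eIntegral μ f := by
  have hk' : (0 : EReal) ≤ k := mod_cast hk
  simp only [eIntegral_eq_lintegral_sub_lintegral, ← mul_neg, EReal.toENNReal_mul hk',
    lintegral_const_mul' _ _ (EReal.toENNReal_ne_top_iff.2 (EReal.coe_ne_top k)),
    EReal.coe_ennreal_mul, EReal.coe_toENNReal hk']
  exact (EReal.mul_sub_of_nonneg_of_ne_top hk' (EReal.coe_ne_top k)).symm

lemma eIntegral_add_le {f : Ω → EReal} (hf : Measurable f) {C : Ω → ℝ≥0∞} (hC : Measurable C)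
    (hCint : ∫⁻ ω, C ω ∂μ ≠ ⊤) :
    eIntegral μ (fun ω => f ω + C ω) ≤ eIntegral μ f + ((∫⁻ ω, C ω ∂μ : ℝ≥0∞) : EReal) := by
  have hCfin : ∀ᵐ ω ∂μ, C ω ≠ ⊤ := (ae_lt_top hC hCint).mono fun ω h => h.ne
  have hfneg : Measurable fun ω => (-f ω).toENNReal := hf.neg.ereal_toENNReal
  simp only [eIntegral_eq_lintegral_sub_lintegral]
  refine EReal.coe_ennreal_sub_le_sub_add hCint ?_ ?_
  · rw [← lintegral_add_right _ hfneg, add_assoc, ← lintegral_add_right _ hC,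
      ← lintegral_add_left hf.ereal_toENNReal]
    exact lintegral_congr_ae (hCfin.mono fun ω hω =>
      (EReal.toENNReal_add_coe_add_toENNReal_neg (f ω) hω).trans (add_assoc _ _ _))
  · rw [← lintegral_add_right _ hC]
    exact lintegral_mono_ae
      (hCfin.mono fun ω hω => EReal.toENNReal_neg_le_toENNReal_neg_add (f ω) hω)

lemma eIntegral_le_mul_add_lintegral {f g : Ω → EReal} {C : Ω → ℝ≥0∞} {k : ℝ} (hk : 0 ≤ k)
    (hg : Measurable g) (hC : Measurable C) (hCint : ∫⁻ ω, C ω ∂μ ≠ ⊤)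
    (hfg : ∀ ω, C ω ≠ ⊤ → f ω ≤ k * (g ω + C ω)) :
    eIntegral μ f ≤ k * (eIntegral μ g + ((∫⁻ ω, C ω ∂μ : ℝ≥0∞) : EReal)) := calc
  eIntegral μ f ≤ eIntegral μ (fun ω => k * (g ω + C ω)) :=
    eIntegral_mono_ae ((ae_lt_top hC hCint).mono fun ω hω => hfg ω hω.ne)
  _ = k * eIntegral μ (fun ω => g ω + C ω) := eIntegral_const_mul hk _
  _ ≤ k * (eIntegral μ g + ((∫⁻ ω, C ω ∂μ : ℝ≥0∞) : EReal)) := by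
    gcongr
    exact eIntegral_add_le hg hC hCint

end eIntegral

theorem value_function_elasticity_general {Ω : Type*} [MeasurableSpace Ω] (d : ℕ)
    (Y : Ω → EuclideanSpace ℝ (Fin d))
    (C : Ω → ℝ≥0∞) (hCm : Measurable C) (γ : ℝ)
    (V : Ω × ℝ → EReal)
    (hV : ∀ ω : Ω, C ω ≠ ⊤ → ∀ l x : ℝ, 1 ≤ l →
      V (ω, l * x) ≤ ((l ^ γ : ℝ) : EReal) * (V (ω, x) + (C ω : EReal)))
    (Q : Set (Measure Ω))
    (hVmeas : ∀ (x : ℝ) (h : EuclideanSpace ℝ (Fin d)),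
      Measurable fun ω => V (ω, x + ⟪h, Y ω⟫))
    (c : ℝ≥0∞) (hc : c = ⨆ q ∈ Q, ∫⁻ ω, C ω ∂q) (hcfin : c ≠ ⊤) :
    ∀ l x : ℝ, 1 ≤ l →
      (⨆ h : EuclideanSpace ℝ (Fin d), ⨅ q ∈ Q,
          eIntegral q fun ω => V (ω, l * x + ⟪h, Y ω⟫)) ≤
        ((l ^ γ : ℝ) : EReal) *
          ((⨆ h : EuclideanSpace ℝ (Fin d), ⨅ q ∈ Q,
              eIntegral q fun ω => V (ω, x + ⟪h, Y ω⟫)) + (c : EReal)) := by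
  intro l x hl
  have hl₀ : 0 < l := by linarith
  have hk : 0 < l ^ γ := Real.rpow_pos_of_pos hl₀ γ
  refine iSup_le fun h => ?_
  have hscale : ∀ ω, l * x + ⟪h, Y ω⟫ = l * (x + ⟪l⁻¹ • h, Y ω⟫) := fun ω => by
    rw [real_inner_smul_left, mul_add, mul_inv_cancel_left₀ hl₀.ne']
  have hq : ∀ q ∈ Q, (eIntegral q fun ω => V (ω, l * x + ⟪h, Y ω⟫)) ≤
      ((l ^ γ : ℝ) : EReal) * ((eIntegral q fun ω => V (ω, x + ⟪l⁻¹ • h, Y ω⟫)) + c) := by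
    intro q hq
    have hCq : ∫⁻ ω, C ω ∂q ≤ c := hc ▸ le_iSup₂ (f := fun q (_ : q ∈ Q) => ∫⁻ ω, C ω ∂q) q hq
    refine (eIntegral_le_mul_add_lintegral hk.le (hVmeas x _) hCm (ne_top_of_le_ne_top hcfin hCq)
      fun ω hω => hscale ω ▸ hV ω hω l _ hl).trans ?_
    gcongr
    exact EReal.coe_ennreal_le_coe_ennreal_iff.2 hCq
  calc (⨅ q ∈ Q, eIntegral q fun ω => V (ω, l * x + ⟪h, Y ω⟫))
      ≤ ⨅ q ∈ Q, ((l ^ γ : ℝ) : EReal) *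
          ((eIntegral q fun ω => V (ω, x + ⟪l⁻¹ • h, Y ω⟫)) + c) := iInf₂_mono hq
    _ = ((l ^ γ : ℝ) : EReal) *
          ((⨅ q ∈ Q, eIntegral q fun ω => V (ω, x + ⟪l⁻¹ • h, Y ω⟫)) + c) := by
      simp only [EReal.coe_mul_iInf_add _ hk (EReal.coe_ennreal_ne_bot c)
        (EReal.coe_ennreal_eq_top_iff.not.2 hcfin)]
    _ ≤ _ := by
      gcongr
      exact le_iSup (fun h' => ⨅ q ∈ Q, eIntegral q fun ω => V (ω, x + ⟪h', Y ω⟫)) _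

/-- If `V(ω, λx) ≤ λ^γ (V(ω,x) + C(ω))` whenever `C(ω) < ∞`, each prior `q ∈ 𝒬` is a
probability measure with `q(C < ∞) = 1`, and `c = sup_{q ∈ 𝒬} ∫ C dq < ∞`, then the
value function `u(x) = sup_h inf_{q ∈ 𝒬} ∫ V(ω, x + h·Y(ω)) q(dω)` satisfies
`u(λx) ≤ λ^γ (u(x) + c)` for all `λ ≥ 1`, `x ∈ ℝ`. -/
theorem value_function_elasticity {Ω : Type*} [MeasurableSpace Ω] (d : ℕ)
    (Y : Ω → EuclideanSpace ℝ (Fin d)) (hY : Measurable Y)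
    (C : Ω → ℝ≥0∞) (hCm : Measurable C) (γ : ℝ) (hγ : 0 < γ)
    (V : Ω × ℝ → EReal)
    (hV : ∀ ω : Ω, C ω ≠ ⊤ → ∀ l x : ℝ, 1 ≤ l →
      V (ω, l * x) ≤ ((l ^ γ : ℝ) : EReal) * (V (ω, x) + (C ω : EReal)))
    (Q : Set (Measure Ω)) (hQne : Q.Nonempty)
    (hQprob : ∀ q ∈ Q, IsProbabilityMeasure q)
    (hQC : ∀ q ∈ Q, q {ω | C ω ≠ ⊤} = 1)
    (hVmeas : ∀ (x : ℝ) (h : EuclideanSpace ℝ (Fin d)),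
      Measurable fun ω => V (ω, x + ⟪h, Y ω⟫))
    (c : ℝ≥0∞) (hc : c = ⨆ q ∈ Q, ∫⁻ ω, C ω ∂q) (hcfin : c ≠ ⊤) :
    ∀ l x : ℝ, 1 ≤ l →
      (⨆ h : EuclideanSpace ℝ (Fin d), ⨅ q ∈ Q,
          eIntegral q fun ω => V (ω, l * x + ⟪h, Y ω⟫)) ≤
        ((l ^ γ : ℝ) : EReal) *
          ((⨆ h : EuclideanSpace ℝ (Fin d), ⨅ q ∈ Q,
              eIntegral q fun ω => V (ω, x + ⟪h, Y ω⟫)) + (c : EReal)) :=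
  value_function_elasticity_general d Y C hCm γ V hV Q hVmeas c hc hcfin
end
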